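/- Let V be a finite nonempty type and μ : V → V → ℝ a symmetric function with μ x y ≥ 0 and μ x x = 0 for all x, y, such that μ x y ≥ 1 whenever μ x y ≠ 0. Set μ_x = ∑_{y} μ x y and assume μ_x > 0 for every x. Let G be the simple graph on V with x adjacent to y iff x ≠ y and μ x y > 0, assumed connected, with graph distance d(x,y). Define L ∈ Matrix V V ℝ by L x y = μ x y / μ_x for x ≠ y and L x x = -1, and for t ≥ 0 set q_t(x,y) = (Matrix.exp (t • L)) x y / μ_y. Then for every t > 0 and all x₀, y ∈ V, (q_t(x₀,y) - q_t(x₀,x₀))^2 ≤ (d(x₀,y) : ℝ) * q_t(x₀,x₀) / t. -/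

import Mathlib

/-!
Write `f = q_t(x₀, ·)` and `𝓔(f) = ½ ∑ μ x z (f x - f z)²` for its Dirichlet energy.
Cauchy–Schwarz along a shortest path from `x₀` to `y`, whose edges all have weight at least one,
gives `(f y - f x₀)² ≤ d(x₀, y) 𝓔(f)`.

On the other hand `𝓔(f) = -⟨L f, f⟩_μ`, and `L` is self-adjoint for `⟨·, ·⟩_μ`, so conjugating it
by `D = diag √μ_x` gives a symmetric matrix `S` with `e^{tL} = D⁻¹ e^{tS} D`. In the functional
calculus of `S`, `e^{tS} + t e^{tS} S e^{tS} = φ(S)` with `φ(λ) = e^{tλ} (1 + tλ e^{tλ}) ≥ 0`, and the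
`(x₀, x₀)` entry of this positive semidefinite matrix is `μ_{x₀} (f x₀ - t 𝓔(f))`.
-/

open Finset Matrix

theorem Real.one_add_mul_exp_nonneg (u : ℝ) : 0 ≤ 1 + u * Real.exp u := by
  rcases le_total 0 u with hu | hu
  · positivity
  · have hexp := Real.add_one_le_exp (-u)
    have hinv : Real.exp (-u) * Real.exp u = 1 := by
      rw [← Real.exp_add, neg_add_cancel, Real.exp_zero]
    nlinarith [Real.exp_pos u]

namespace Matrix

variable {V : Type*} [Fintype V] [DecidableEq V]

theorem exp_diagonal_inv_mul_mul_diagonal {𝕜 : Type*} [RCLike 𝕜] {d : V → 𝕜}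
    (hd : ∀ i, d i ≠ 0) (A : Matrix V V 𝕜) :
    NormedSpace.exp (diagonal d⁻¹ * A * diagonal d)
      = diagonal d⁻¹ * NormedSpace.exp A * diagonal d := by
  have hinv : ∀ e : V → 𝕜, (∀ i, e i ≠ 0) → diagonal e⁻¹ * diagonal e = 1 := fun e he => by
    rw [diagonal_mul_diagonal, ← diagonal_one]
    exact congrArg diagonal (funext fun i => inv_mul_cancel₀ (he i))
  let U : (Matrix V V 𝕜)ˣ := ⟨diagonal d, diagonal d⁻¹,
    by simpa using hinv d⁻¹ fun i => inv_ne_zero (hd i), hinv d hd⟩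
  exact exp_units_conj' U A

open scoped Matrix.Norms.L2Operator in
theorem IsHermitian.exp_smul_eq_cfc {S : Matrix V V ℝ} (hS : S.IsHermitian) (t : ℝ) :
    NormedSpace.exp (t • S) = cfc (fun x => Real.exp (t * x)) S := by
  rw [← CFC.real_exp_eq_normedSpace_exp ((IsSelfAdjoint.all t).smul hS.isSelfAdjoint)]
  exact (cfc_comp_smul t Real.exp S).symm

open scoped MatrixOrder in
theorem IsHermitian.posSemidef_exp_add_smul_exp_mul_exp {S : Matrix V V ℝ}
    (hS : S.IsHermitian) (t : ℝ) :
    (NormedSpace.exp (t • S)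
      + t • (NormedSpace.exp (t • S) * S * NormedSpace.exp (t • S))).PosSemidef := by
  have hcfc : NormedSpace.exp (t • S)
        + t • (NormedSpace.exp (t • S) * S * NormedSpace.exp (t • S))
      = cfc (fun x => Real.exp (t * x) + t • (Real.exp (t * x) * x * Real.exp (t * x))) S := by
    rw [cfc_add .., cfc_smul .., cfc_mul .., cfc_mul .., cfc_id' ℝ S, hS.exp_smul_eq_cfc]
  rw [← nonneg_iff_posSemidef, hcfc]
  refine cfc_nonneg fun x _ => ?_
  have hfactor : Real.exp (t * x) + t • (Real.exp (t * x) * x * Real.exp (t * x))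
      = Real.exp (t * x) * (1 + t * x * Real.exp (t * x)) := by
    rw [smul_eq_mul]; ring
  rw [hfactor]
  exact mul_nonneg (Real.exp_pos _).le (Real.one_add_mul_exp_nonneg _)

end Matrix

section Reversible

variable {V : Type*} [Fintype V] [DecidableEq V] {L : Matrix V V ℝ} {π : V → ℝ}

theorem isHermitian_diagonal_sqrt_mul_mul_diagonal_inv (hπ : ∀ x, 0 < π x)
    (hrev : ∀ x z, π x * L x z = π z * L z x) :
    (diagonal (fun x => √(π x)) * L * diagonal (fun x => √(π x))⁻¹).IsHermitian := by
  refine IsHermitian.ext fun x z => ?_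
  have hx := Real.sqrt_pos.2 (hπ x)
  have hz := Real.sqrt_pos.2 (hπ z)
  simp only [mul_diagonal, diagonal_mul, Pi.inv_apply, star_trivial]
  field_simp
  rw [Real.sq_sqrt (hπ x).le, Real.sq_sqrt (hπ z).le, hrev]

theorem neg_mul_sum_mul_mulVec_le_of_reversible (hπ : ∀ x, 0 < π x)
    (hrev : ∀ x z, π x * L x z = π z * L z x) (t : ℝ) (x₀ : V) {h : V → ℝ}
    (hh : ∀ z, h z = NormedSpace.exp (t • L) x₀ z / π z) :
    -(t * ∑ x, π x * h x * (L *ᵥ h) x) ≤ h x₀ := by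
  set s : V → ℝ := fun x => √(π x)
  have hs : ∀ x, 0 < s x := fun x => Real.sqrt_pos.2 (hπ x)
  have hss : ∀ x, s x * s x = π x := fun x => Real.mul_self_sqrt (hπ x).le
  set S := diagonal s * L * diagonal s⁻¹
  have hS : S.IsHermitian := isHermitian_diagonal_sqrt_mul_mul_diagonal_inv hπ hrev
  set K := NormedSpace.exp (t • S)
  have hK : K.IsHermitian := (hS.smul (IsSelfAdjoint.all t)).exp
  have hL : L = diagonal s⁻¹ * S * diagonal s := by
    ext x z
    simp only [S, mul_diagonal, diagonal_mul, Pi.inv_apply]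
    field_simp [(hs x).ne', (hs z).ne']
  have hP : NormedSpace.exp (t • L) = diagonal s⁻¹ * K * diagonal s := by
    rw [← exp_diagonal_inv_mul_mul_diagonal fun x => (hs x).ne', Matrix.mul_smul,
      Matrix.smul_mul, ← hL]
  have hhK : ∀ z, h z = K z x₀ / (s x₀ * s z) := fun z => by
    rw [hh, hP, ← hK.apply z x₀, star_trivial, mul_diagonal, diagonal_mul, Pi.inv_apply, ← hss]
    field_simp [(hs x₀).ne', (hs z).ne']
  have hquad : ∑ x, π x * h x * (L *ᵥ h) x = (K * S * K) x₀ x₀ / π x₀ := calc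
    _ = ∑ x, ∑ z, K x₀ x * S x z * K z x₀ / π x₀ := by
        refine sum_congr rfl fun x _ => ?_
        simp only [mulVec, dotProduct, mul_sum]
        refine sum_congr rfl fun z _ => ?_
        rw [hhK, hhK, ← hK.apply x x₀, star_trivial, ← hss, ← hss]
        simp only [S, mul_diagonal, diagonal_mul, Pi.inv_apply]
        field_simp [(hs x₀).ne', (hs x).ne', (hs z).ne']
    _ = (K * S * K) x₀ x₀ / π x₀ := by
        simp only [mul_apply, sum_mul, sum_div]
        exact sum_comm
  have hdiag : 0 ≤ K x₀ x₀ + t * (K * S * K) x₀ x₀ :=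
    (hS.posSemidef_exp_add_smul_exp_mul_exp t).diag_nonneg
  rw [hquad, hhK, hss, ← mul_div_assoc, ← neg_div]
  exact div_le_div_of_nonneg_right (by linarith) (hπ x₀).le

end Reversible

noncomputable def dirichletEnergy {V : Type*} [Fintype V] (μ : V → V → ℝ) (f : V → ℝ) : ℝ :=
  (∑ x, ∑ z, μ x z * (f x - f z) ^ 2) / 2

namespace SimpleGraph

variable {V : Type*} {G : SimpleGraph V} {u v : V}

theorem Walk.sum_map_darts_sub {A : Type*} [AddCommGroup A] (f : V → A) (p : G.Walk u v) :
    (p.darts.map fun d => f d.snd - f d.fst).sum = f v - f u := by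
  induction p with
  | nil => simp
  | cons h p ih => simp [ih]

theorem Walk.IsTrail.symm_notMem_darts {p : G.Walk u v} (hp : p.IsTrail) {d : G.Dart}
    (hd : d ∈ p.darts) : d.symm ∉ p.darts := fun hd' =>
  d.symm_ne (List.inj_on_of_nodup_map hp.edges_nodup hd' hd d.edge_symm)

theorem Walk.IsTrail.two_mul_sum_darts_le [Fintype V] {p : G.Walk u v} (hp : p.IsTrail)
    (w : V → V → ℝ) (hsymm : ∀ x z, w x z = w z x) (hnonneg : ∀ x z, 0 ≤ w x z) :
    2 * (p.darts.map fun d => w d.fst d.snd).sum ≤ ∑ x, ∑ z, w x z := by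
  classical
  set D := p.darts.toFinset
  have hdisj : Disjoint D (D.image Dart.symm) := by
    refine Finset.disjoint_left.2 fun d hd hd' => ?_
    obtain ⟨e, he, rfl⟩ := mem_image.1 hd'
    exact hp.symm_notMem_darts (List.mem_toFinset.1 he) (List.mem_toFinset.1 hd)
  calc 2 * (p.darts.map fun d => w d.fst d.snd).sum
      = ∑ d ∈ D ∪ D.image Dart.symm, w d.fst d.snd := by
        rw [sum_union hdisj, sum_image Dart.symm_involutive.injective.injOn, two_mul,
          ← List.sum_toFinset _ (hp.edges_nodup.of_map _)]
        congr 1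
        exact sum_congr rfl fun d _ => hsymm _ _
    _ = ∑ pr ∈ (D ∪ D.image Dart.symm).image Dart.toProd, w pr.1 pr.2 :=
        (sum_image (f := fun pr : V × V => w pr.1 pr.2) Dart.toProd_injective.injOn).symm
    _ ≤ ∑ pr : V × V, w pr.1 pr.2 :=
        sum_le_sum_of_subset_of_nonneg (subset_univ _) fun pr _ _ => hnonneg _ _
    _ = ∑ x, ∑ z, w x z := Fintype.sum_prod_type _

theorem Walk.IsTrail.sq_sub_le_length_mul_dirichletEnergy [Fintype V] {p : G.Walk u v}
    (hp : p.IsTrail) {μ : V → V → ℝ} (hsymm : ∀ x z, μ x z = μ z x)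
    (hnonneg : ∀ x z, 0 ≤ μ x z) (hadj : ∀ x z, G.Adj x z → 1 ≤ μ x z) (f : V → ℝ) :
    (f v - f u) ^ 2 ≤ p.length * dirichletEnergy μ f := by
  classical
  have hnodup : p.darts.Nodup := hp.edges_nodup.of_map _
  set D := p.darts.toFinset
  have hcard : (#D : ℝ) = p.length := by
    rw [List.toFinset_card_of_nodup hnodup, length_darts]
  have hdarts := hp.two_mul_sum_darts_le (fun x z => μ x z * (f x - f z) ^ 2)
    (fun x z => by rw [hsymm, ← neg_sub, neg_sq])
    fun x z => mul_nonneg (hnonneg x z) (sq_nonneg _)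
  rw [← List.sum_toFinset _ hnodup] at hdarts
  calc (f v - f u) ^ 2 = (∑ d ∈ D, (f d.snd - f d.fst)) ^ 2 := by
        rw [List.sum_toFinset _ hnodup, p.sum_map_darts_sub]
    _ ≤ #D * ∑ d ∈ D, (f d.snd - f d.fst) ^ 2 := sq_sum_le_card_mul_sum_sq
    _ ≤ p.length * ∑ d ∈ D, μ d.fst d.snd * (f d.fst - f d.snd) ^ 2 := by
        rw [hcard]
        gcongr with d
        rw [← neg_sub, neg_sq]
        exact le_mul_of_one_le_left (sq_nonneg _) (hadj _ _ d.adj)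
    _ ≤ p.length * dirichletEnergy μ f := by
        unfold dirichletEnergy
        gcongr
        linarith

theorem Connected.sq_sub_le_dist_mul_dirichletEnergy [Fintype V] (hG : G.Connected)
    {μ : V → V → ℝ} (hsymm : ∀ x z, μ x z = μ z x) (hnonneg : ∀ x z, 0 ≤ μ x z)
    (hadj : ∀ x z, G.Adj x z → 1 ≤ μ x z) (f : V → ℝ) (u v : V) :
    (f v - f u) ^ 2 ≤ G.dist u v * dirichletEnergy μ f := by
  obtain ⟨p, hp⟩ := hG.exists_walk_length_eq_dist u v
  rw [← hp]
  exact (p.isPath_of_length_eq_dist hp).isTrail.sq_sub_le_length_mul_dirichletEnergy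
    hsymm hnonneg hadj f

end SimpleGraph

section Generator

variable {V : Type*} [DecidableEq V] {μ : V → V → ℝ} {π : V → ℝ} {L : Matrix V V ℝ}

theorem mul_apply_of_generator (hdiag : ∀ x, μ x x = 0) (hπ₀ : ∀ x, π x ≠ 0)
    (hL : ∀ x z, L x z = if x = z then -1 else μ x z / π x) (x z : V) :
    π x * L x z = μ x z - if x = z then π x else 0 := by
  rw [hL]
  split_ifs with h
  · rw [h, hdiag]; ring
  · field_simp [hπ₀ x]; ring

theorem dirichletEnergy_eq_neg_sum_mul_mulVec [Fintype V] (hsymm : ∀ x z, μ x z = μ z x)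
    (hdiag : ∀ x, μ x x = 0) (hπ : ∀ x, π x = ∑ z, μ x z) (hπ₀ : ∀ x, π x ≠ 0)
    (hL : ∀ x z, L x z = if x = z then -1 else μ x z / π x) (f : V → ℝ) :
    dirichletEnergy μ f = -∑ x, π x * f x * (L *ᵥ f) x := by
  have hLf : ∑ x, π x * f x * (L *ᵥ f) x
      = ∑ x, ∑ z, μ x z * f x * f z - ∑ x, π x * f x ^ 2 := by
    simp only [mulVec, dotProduct, mul_sum, ← sum_sub_distrib]
    refine sum_congr rfl fun x _ => ?_
    calc ∑ z, π x * f x * (L x z * f z)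
        = ∑ z, (μ x z - if x = z then π x else 0) * f x * f z := sum_congr rfl fun z _ => by
          rw [← mul_apply_of_generator hdiag hπ₀ hL]; ring
      _ = ∑ z, μ x z * f x * f z - π x * f x ^ 2 := by
          simp only [sub_mul, sum_sub_distrib, ite_mul, zero_mul, sum_ite_eq, mem_univ, if_true]
          ring
  have hleft : ∑ x, ∑ z, μ x z * f x ^ 2 = ∑ x, π x * f x ^ 2 := by simp_rw [hπ, sum_mul]
  have hright : ∑ x, ∑ z, μ x z * f z ^ 2 = ∑ x, π x * f x ^ 2 := by
    rw [sum_comm]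
    simp_rw [hπ, sum_mul, hsymm]
  have hexpand : ∑ x, ∑ z, μ x z * (f x - f z) ^ 2 = ∑ x, ∑ z, μ x z * f x ^ 2
      + ∑ x, ∑ z, μ x z * f z ^ 2 - 2 * ∑ x, ∑ z, μ x z * f x * f z := by
    simp only [mul_sum, ← sum_add_distrib, ← sum_sub_distrib]
    exact sum_congr rfl fun x _ => sum_congr rfl fun z _ => by ring
  rw [dirichletEnergy, hLf, hexpand, hleft, hright]
  ring

end Generator

theorem heat_kernel_holder_continuity_general
    {V : Type*} [Fintype V] [DecidableEq V]
    (μ : V → V → ℝ) (hsym : ∀ x y, μ x y = μ y x)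
    (hnonneg : ∀ x y, 0 ≤ μ x y) (hdiag : ∀ x, μ x x = 0)
    (hone : ∀ x y, μ x y ≠ 0 → 1 ≤ μ x y)
    (μv : V → ℝ) (hμv : ∀ x, μv x = ∑ y, μ x y)
    (hpos : ∀ x, 0 < μv x)
    (G : SimpleGraph V) (hG : ∀ x y, G.Adj x y ↔ x ≠ y ∧ 0 < μ x y)
    (hconn : G.Connected)
    (L : Matrix V V ℝ)
    (hL : ∀ x y, L x y = if x = y then -1 else μ x y / μv x)
    (q : ℝ → V → V → ℝ)
    (hq : ∀ t x y, q t x y = NormedSpace.exp (t • L) x y / μv y)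
    (t : ℝ) (ht : 0 < t) (x₀ y : V) :
    (q t x₀ y - q t x₀ x₀) ^ 2 ≤ (G.dist x₀ y : ℝ) * q t x₀ x₀ / t := by
  have hμv₀ : ∀ x, μv x ≠ 0 := fun x => (hpos x).ne'
  have hrev : ∀ x z, μv x * L x z = μv z * L z x := fun x z => by
    by_cases h : x = z
    · rw [h]
    · rw [mul_apply_of_generator hdiag hμv₀ hL, mul_apply_of_generator hdiag hμv₀ hL, hsym,
        if_neg h, if_neg (Ne.symm h)]
  have hpath := hconn.sq_sub_le_dist_mul_dirichletEnergy hsym hnonneg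
    (fun x z hxz => hone x z ((hG x z).1 hxz).2.ne') (q t x₀) x₀ y
  have henergy : t * dirichletEnergy μ (q t x₀) ≤ q t x₀ x₀ := by
    rw [dirichletEnergy_eq_neg_sum_mul_mulVec hsym hdiag hμv hμv₀ hL, mul_neg]
    exact neg_mul_sum_mul_mulVec_le_of_reversible hpos hrev t x₀ (hq t x₀)
  calc (q t x₀ y - q t x₀ x₀) ^ 2 ≤ G.dist x₀ y * dirichletEnergy μ (q t x₀) := hpath
    _ ≤ G.dist x₀ y * (q t x₀ x₀ / t) := by
        gcongr
        rwa [le_div_iff₀' ht]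
    _ = G.dist x₀ y * q t x₀ x₀ / t := (mul_div_assoc ..).symm

/-- Lemma 4.3 for a finite weighted graph: Hölder-type continuity of the heat
kernel, `(q_t(x₀,y) - q_t(x₀,x₀))² ≤ d(x₀,y) q_t(x₀,x₀) / t`. -/
theorem heat_kernel_holder_continuity
    {V : Type*} [Fintype V] [Nonempty V] [DecidableEq V]
    (μ : V → V → ℝ) (hsym : ∀ x y, μ x y = μ y x)
    (hnonneg : ∀ x y, 0 ≤ μ x y) (hdiag : ∀ x, μ x x = 0)
    (hone : ∀ x y, μ x y ≠ 0 → 1 ≤ μ x y)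
    (μv : V → ℝ) (hμv : ∀ x, μv x = ∑ y, μ x y)
    (hpos : ∀ x, 0 < μv x)
    (G : SimpleGraph V) (hG : ∀ x y, G.Adj x y ↔ x ≠ y ∧ 0 < μ x y)
    (hconn : G.Connected)
    (L : Matrix V V ℝ)
    (hL : ∀ x y, L x y = if x = y then -1 else μ x y / μv x)
    (q : ℝ → V → V → ℝ)
    (hq : ∀ t x y, q t x y = NormedSpace.exp (t • L) x y / μv y)
    (t : ℝ) (ht : 0 < t) (x₀ y : V) :
    (q t x₀ y - q t x₀ x₀) ^ 2 ≤ (G.dist x₀ y : ℝ) * q t x₀ x₀ / t :=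
  heat_kernel_holder_continuity_general μ hsym hnonneg hdiag hone μv hμv hpos G hG hconn L hL q hq t
    ht x₀ y
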